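/- Let n ∈ ℤ₊ ∪ {∞}. Then φ is differentiable on (α,β) with φ′ extending to a function on [α,β] belonging to C_φ^{(n)} if and only if, for all 0 ≤ k ≤ n, the function φ is (k+1)-times differentiable on (α,β) and φ^k · ∂_t^{k+1} φ extends to a continuous function on [α,β]. -/

import Mathlib

/-!
Write `W j := φ ^ j * ∂^{j+1} φ` (`weightedDeriv φ j`), so that `W 0 = φ′` and
`X (W j) = j φ′ W j + W (j + 1)`. Since `X = φ ∂` obeys the Leibniz rule, induction gives `X^k φ′ = W k + E` with `E` in the
algebra generated by `W 0, …, W (k - 1)`. Once these extend continuously to `[α, β]`, so does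
`E`, and then `X^k φ′` extends iff `W k` does; and since `φ ≠ 0`, `X^k φ′` is differentiable iff
`∂^{k+1} φ` is. Induction on `k` then matches the conditions defining `C_φ^{(k)}` one by one with
those on `W 0, …, W k`.
-/

open Real Set Filter Topology

/-- The open interval `(α, β)` of real numbers, where `α β` are extended reals. -/
def EI (α β : EReal) : Set ℝ := {x : ℝ | α < (x : EReal) ∧ (x : EReal) < β}

/-- `u : ℝ → ℝ` (thought of as a function on `(α, β)`) extends to a continuous
function on `[α, β] ⊆ EReal`. -/
def ContExt (α β : EReal) (u : ℝ → ℝ) : Prop :=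
  ∃ g : EReal → ℝ, ContinuousOn g (Set.Icc α β) ∧
    ∀ x : ℝ, x ∈ EI α β → g (x : EReal) = u x

/-- The operator `X u := φ · u′`. -/
noncomputable def Xop (φ u : ℝ → ℝ) : ℝ → ℝ := fun x => φ x * deriv u x

/-- The iterates `X^k u`. -/
noncomputable def Xiter (φ : ℝ → ℝ) : ℕ → (ℝ → ℝ) → (ℝ → ℝ)
  | 0, u => u
  | n + 1, u => Xop φ (Xiter φ n u)

/-- The space `C_φ^{(n)}`: inductively, `C_φ^{(0)}` consists of the functions having a
continuous extension to `[α, β]`, and `u ∈ C_φ^{(n+1)}` iff `u ∈ C_φ^{(n)}`, `X^n u` is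
differentiable on `(α, β)`, and `X^{n+1} u` extends to a continuous function on `[α, β]`. -/
def CN (α β : EReal) (φ : ℝ → ℝ) : ℕ → Set (ℝ → ℝ)
  | 0 => {u | ContExt α β u}
  | n + 1 => {u | u ∈ CN α β φ n ∧
      (∀ x ∈ EI α β, DifferentiableAt ℝ (Xiter φ n u) x) ∧
      ContExt α β (Xiter φ (n + 1) u)}

/-- The space `C_φ^{(∞)} := ⋂ₙ C_φ^{(n)}`. -/
def Cinf (α β : EReal) (φ : ℝ → ℝ) : Set (ℝ → ℝ) := ⋂ n : ℕ, CN α β φ n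

/-- The spaces `C_φ^{(n)}` for `n ∈ ℤ₊ ∪ {∞}`. -/
def CNE (α β : EReal) (φ : ℝ → ℝ) (n : ℕ∞) : Set (ℝ → ℝ) :=
  WithTop.recTopCoe (Cinf α β φ) (fun k => CN α β φ k) n

theorem isOpen_EI (α β : EReal) : IsOpen (EI α β) :=
  isOpen_Ioo.preimage continuous_coe_real_ereal

theorem ContExt.congr {α β : EReal} {u v : ℝ → ℝ} (hu : ContExt α β u) (h : EqOn u v (EI α β)) :
    ContExt α β v := by
  obtain ⟨g, hg, hgu⟩ := hu
  exact ⟨g, hg, fun x hx => (hgu x hx).trans (h hx)⟩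

def contExtSubalgebra (α β : EReal) : Subalgebra ℝ (ℝ → ℝ) where
  carrier := {u | ContExt α β u}
  mul_mem' := by
    rintro u v ⟨g, hg, hgu⟩ ⟨h, hh, hhv⟩
    exact ⟨g * h, hg.mul hh, fun x hx => by simp [hgu x hx, hhv x hx]⟩
  add_mem' := by
    rintro u v ⟨g, hg, hgu⟩ ⟨h, hh, hhv⟩
    exact ⟨g + h, hg.add hh, fun x hx => by simp [hgu x hx, hhv x hx]⟩
  algebraMap_mem' c := ⟨fun _ => c, continuousOn_const, fun _ _ => rfl⟩

theorem Xop_eqOn_of_eqOn {φ u v : ℝ → ℝ} {s : Set ℝ} (hs : IsOpen s) (h : EqOn u v s) :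
    EqOn (Xop φ u) (Xop φ v) s := fun x hx => by
  simp only [Xop, (eventuallyEq_of_mem (hs.mem_nhds hx) h).deriv_eq]

theorem Xop_add_apply {φ u v : ℝ → ℝ} {x : ℝ} (hu : DifferentiableAt ℝ u x)
    (hv : DifferentiableAt ℝ v x) : Xop φ (u + v) x = Xop φ u x + Xop φ v x := by
  simp only [Xop, deriv_add hu hv, mul_add]

theorem antitone_CN (α β : EReal) (φ : ℝ → ℝ) : Antitone (CN α β φ) :=
  antitone_nat_of_succ_le fun _ _ hu => hu.1

theorem mem_CNE_iff {α β : EReal} {φ u : ℝ → ℝ} {n : ℕ∞} :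
    u ∈ CNE α β φ n ↔ ∀ k : ℕ, (k : ℕ∞) ≤ n → u ∈ CN α β φ k := by
  induction n using ENat.recTopCoe with
  | top =>
    show u ∈ Cinf α β φ ↔ _
    simp [Cinf]
  | coe m =>
    show u ∈ CN α β φ m ↔ _
    exact ⟨fun hu k hk => antitone_CN α β φ (Nat.cast_le.1 hk) hu, fun h => h m le_rfl⟩

theorem forall_le_add_one_iff {p : ℕ → Prop} {k : ℕ} :
    (∀ j ≤ k + 1, p j) ↔ (∀ j ≤ k, p j) ∧ p (k + 1) := by
  simp only [Nat.le_succ_iff, or_imp, forall_and, forall_eq]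

noncomputable def weightedDeriv (φ : ℝ → ℝ) (j : ℕ) : ℝ → ℝ :=
  fun x => φ x ^ j * iteratedDeriv (j + 1) φ x

def weightedDerivAlgebra (φ : ℝ → ℝ) (K : ℕ) : Subalgebra ℝ (ℝ → ℝ) :=
  Algebra.adjoin ℝ (weightedDeriv φ '' Iio K)

section weightedDeriv

variable {φ : ℝ → ℝ} {j K : ℕ}

@[simp]
theorem weightedDeriv_zero : weightedDeriv φ 0 = deriv φ := by
  ext x
  simp [weightedDeriv]

theorem weightedDeriv_mem (h : j < K) : weightedDeriv φ j ∈ weightedDerivAlgebra φ K :=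
  Algebra.subset_adjoin ⟨j, h, rfl⟩

theorem deriv_mem_weightedDerivAlgebra (h : 0 < K) : deriv φ ∈ weightedDerivAlgebra φ K :=
  weightedDeriv_zero (φ := φ) ▸ weightedDeriv_mem h

theorem weightedDerivAlgebra_mono {K K' : ℕ} (h : K ≤ K') :
    weightedDerivAlgebra φ K ≤ weightedDerivAlgebra φ K' :=
  Algebra.adjoin_mono (image_mono (Iio_subset_Iio h))

theorem weightedDerivAlgebra_le_contExtSubalgebra {α β : EReal}
    (h : ∀ j < K, ContExt α β (weightedDeriv φ j)) :
    weightedDerivAlgebra φ K ≤ contExtSubalgebra α β :=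
  Algebra.adjoin_le (by rintro _ ⟨j, hj, rfl⟩; exact h j hj)

theorem differentiableAt_of_mem_weightedDerivAlgebra {x : ℝ}
    (hD : ∀ i ≤ K, DifferentiableAt ℝ (iteratedDeriv i φ) x) {f : ℝ → ℝ}
    (hf : f ∈ weightedDerivAlgebra φ K) : DifferentiableAt ℝ f x := by
  induction hf using Algebra.adjoin_induction with
  | mem f hf =>
    obtain ⟨j, hj, rfl⟩ := hf
    have hφ := iteratedDeriv_zero (f := φ) ▸ hD 0 (Nat.zero_le _)
    exact (hφ.pow j).mul (hD (j + 1) hj)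
  | algebraMap c => exact differentiableAt_const c
  | add f g _ _ hf hg => exact hf.add hg
  | mul f g _ _ hf hg => exact hf.mul hg

theorem Xop_weightedDeriv {x : ℝ} (hφ : DifferentiableAt ℝ φ x)
    (h : DifferentiableAt ℝ (iteratedDeriv (j + 1) φ) x) :
    Xop φ (weightedDeriv φ j) x =
      j * (deriv φ x * weightedDeriv φ j x) + weightedDeriv φ (j + 1) x := by
  have hW : HasDerivAt (weightedDeriv φ j) _ x := (hφ.hasDerivAt.fun_pow j).mul h.hasDerivAt
  rw [Xop, hW.deriv, ← iteratedDeriv_succ, weightedDeriv, weightedDeriv]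
  -- the power rule leaves `φ x ^ (j - 1)`, with truncated subtraction at `j = 0`
  cases j with
  | zero => simp
  | succ j => push_cast; ring

theorem exists_mem_eqOn_Xop {s : Set ℝ}
    (hD : ∀ i ≤ K + 1, ∀ x ∈ s, DifferentiableAt ℝ (iteratedDeriv i φ) x) {f : ℝ → ℝ}
    (hf : f ∈ weightedDerivAlgebra φ K) :
    ∃ g ∈ weightedDerivAlgebra φ (K + 1), EqOn (Xop φ f) g s := by
  have hdiff : ∀ {f}, f ∈ weightedDerivAlgebra φ K → ∀ x ∈ s, DifferentiableAt ℝ f x :=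
    fun hf x hx => differentiableAt_of_mem_weightedDerivAlgebra
      (fun i hi => hD i (by omega) x hx) hf
  induction hf using Algebra.adjoin_induction with
  | mem f hf =>
    obtain ⟨j, hj : j < K, rfl⟩ := hf
    refine ⟨(j : ℝ) • (deriv φ * weightedDeriv φ j) + weightedDeriv φ (j + 1),
      add_mem (Subalgebra.smul_mem _ (mul_mem (deriv_mem_weightedDerivAlgebra (by omega))
        (weightedDeriv_mem (by omega))) _) (weightedDeriv_mem (by omega)),
      fun x hx => ?_⟩
    have hφ := iteratedDeriv_zero (f := φ) ▸ hD 0 (Nat.zero_le _) x hx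
    simp [Xop_weightedDeriv hφ (hD (j + 1) (by omega) x hx)]
  | algebraMap c =>
    refine ⟨0, zero_mem _, fun x _ => ?_⟩
    simp [Xop, show algebraMap ℝ (ℝ → ℝ) c = fun _ => c from rfl]
  | add f g hf hg ihf ihg =>
    obtain ⟨F, hF, hfF⟩ := ihf
    obtain ⟨G, hG, hgG⟩ := ihg
    refine ⟨F + G, add_mem hF hG, fun x hx => ?_⟩
    rw [Xop_add_apply (hdiff hf x hx) (hdiff hg x hx), hfF hx, hgG hx, Pi.add_apply]
  | mul f g hf hg ihf ihg =>
    obtain ⟨F, hF, hfF⟩ := ihf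
    obtain ⟨G, hG, hgG⟩ := ihg
    have hmono := weightedDerivAlgebra_mono (φ := φ) (Nat.le_succ K)
    refine ⟨f * G + g * F, add_mem (mul_mem (hmono hf) hG) (mul_mem (hmono hg) hF),
      fun x hx => ?_⟩
    simp only [Xop, Pi.add_apply, Pi.mul_apply, deriv_mul (hdiff hf x hx) (hdiff hg x hx),
      ← hfF hx, ← hgG hx]
    ring

theorem exists_mem_eqOn_Xiter_deriv {s : Set ℝ} (hs : IsOpen s) :
    ∀ k : ℕ, (∀ i ≤ k, ∀ x ∈ s, DifferentiableAt ℝ (iteratedDeriv i φ) x) →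
      ∃ E ∈ weightedDerivAlgebra φ k, EqOn (Xiter φ k (deriv φ)) (weightedDeriv φ k + E) s
  | 0, _ => ⟨0, zero_mem _, fun x _ => by simp [Xiter]⟩
  | k + 1, hD => by
    obtain ⟨E, hE, hXE⟩ := exists_mem_eqOn_Xiter_deriv hs k fun i hi => hD i (by omega)
    obtain ⟨G, hG, hEG⟩ := exists_mem_eqOn_Xop hD hE
    refine ⟨(k : ℝ) • (deriv φ * weightedDeriv φ k) + G,
      add_mem (Subalgebra.smul_mem _ (mul_mem (deriv_mem_weightedDerivAlgebra (by omega))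
        (weightedDeriv_mem (by omega))) _) hG, fun x hx => ?_⟩
    have hφ := iteratedDeriv_zero (f := φ) ▸ hD 0 (Nat.zero_le _) x hx
    have hW := differentiableAt_of_mem_weightedDerivAlgebra (fun i hi => hD i hi x hx)
      (weightedDeriv_mem (Nat.lt_succ_self k))
    have hEx := differentiableAt_of_mem_weightedDerivAlgebra (fun i hi => hD i (by omega) x hx) hE
    change Xop φ (Xiter φ k (deriv φ)) x = _
    rw [Xop_eqOn_of_eqOn hs hXE hx, Xop_add_apply hW hEx,
      Xop_weightedDeriv hφ (hD (k + 1) le_rfl x hx), hEG hx]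
    simp only [Pi.add_apply, Pi.smul_apply, Pi.mul_apply, smul_eq_mul]
    ring

theorem differentiableAt_weightedDeriv_iff {x : ℝ} (hφ : DifferentiableAt ℝ φ x)
    (hφx : φ x ≠ 0) :
    DifferentiableAt ℝ (weightedDeriv φ j) x ↔
      DifferentiableAt ℝ (iteratedDeriv (j + 1) φ) x := by
  refine ⟨fun hW => ?_, fun h => (hφ.pow j).mul h⟩
  refine (hW.mul ((hφ.pow j).inv (pow_ne_zero j hφx))).congr_of_eventuallyEq ?_
  filter_upwards [hφ.continuousAt.eventually_ne hφx] with y hy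
  change _ = weightedDeriv φ j y * (φ y ^ j)⁻¹
  rw [weightedDeriv, mul_comm (φ y ^ j), mul_inv_cancel_right₀ (pow_ne_zero j hy)]

theorem differentiableAt_Xiter_deriv_iff {s : Set ℝ} (hs : IsOpen s) {k : ℕ}
    (hD : ∀ i ≤ k, ∀ x ∈ s, DifferentiableAt ℝ (iteratedDeriv i φ) x) {x : ℝ} (hx : x ∈ s)
    (hφx : φ x ≠ 0) :
    DifferentiableAt ℝ (Xiter φ k (deriv φ)) x ↔
      DifferentiableAt ℝ (iteratedDeriv (k + 1) φ) x := by
  obtain ⟨E, hE, hXE⟩ := exists_mem_eqOn_Xiter_deriv hs k hD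
  have hφ := iteratedDeriv_zero (f := φ) ▸ hD 0 (Nat.zero_le _) x hx
  rw [(eventuallyEq_of_mem (hs.mem_nhds hx) hXE).differentiableAt_iff,
    (differentiableAt_of_mem_weightedDerivAlgebra (fun i hi => hD i hi x hx) hE).add_iff_left,
    differentiableAt_weightedDeriv_iff hφ hφx]

theorem contExt_Xiter_deriv_iff {α β : EReal} {k : ℕ}
    (hD : ∀ i ≤ k, ∀ x ∈ EI α β, DifferentiableAt ℝ (iteratedDeriv i φ) x)
    (hC : ∀ j < k, ContExt α β (weightedDeriv φ j)) :
    ContExt α β (Xiter φ k (deriv φ)) ↔ ContExt α β (weightedDeriv φ k) := by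
  obtain ⟨E, hE, hXE⟩ := exists_mem_eqOn_Xiter_deriv (isOpen_EI α β) k hD
  have hEC := weightedDerivAlgebra_le_contExtSubalgebra hC hE
  exact ⟨fun h => (add_mem_cancel_right hEC).1 (h.congr hXE),
    fun h => ContExt.congr ((add_mem_cancel_right hEC).2 h) hXE.symm⟩

theorem deriv_mem_CN_iff_forall_le {α β : EReal}
    (hφd : ∀ x ∈ EI α β, DifferentiableAt ℝ φ x) (hφ0 : ∀ x ∈ EI α β, φ x ≠ 0) (k : ℕ) :
    deriv φ ∈ CN α β φ k ↔ ∀ j ≤ k,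
      (∀ i ≤ j, ∀ x ∈ EI α β, DifferentiableAt ℝ (iteratedDeriv i φ) x) ∧
        ContExt α β (weightedDeriv φ j) := by
  induction k with
  | zero =>
    simp only [Nat.le_zero, forall_eq, iteratedDeriv_zero, weightedDeriv_zero]
    exact ⟨fun h => ⟨hφd, h⟩, And.right⟩
  | succ k ih =>
    change (deriv φ ∈ CN α β φ k ∧ _ ∧ _) ↔ _
    rw [ih, forall_le_add_one_iff]
    constructor
    · rintro ⟨h, hX, hX'⟩
      have hD := (h k le_rfl).1
      have hD' := forall_le_add_one_iff.2 ⟨hD, fun x hx =>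
        (differentiableAt_Xiter_deriv_iff (isOpen_EI α β) hD hx (hφ0 x hx)).1 (hX x hx)⟩
      exact ⟨h, hD', (contExt_Xiter_deriv_iff hD' fun j hj => (h j (by omega)).2).1 hX'⟩
    · rintro ⟨h, hD', hC'⟩
      have hD := (h k le_rfl).1
      exact ⟨h, fun x hx => (differentiableAt_Xiter_deriv_iff (isOpen_EI α β) hD hx
          (hφ0 x hx)).2 (hD' (k + 1) le_rfl x hx),
        (contExt_Xiter_deriv_iff hD' fun j hj => (h j (by omega)).2).2 hC'⟩

end weightedDeriv

theorem deriv_mem_CN_iff_general (α β : EReal) (φ : ℝ → ℝ)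
    (hφpos : ∀ x ∈ EI α β, 0 < φ x)
    (n : ℕ∞) :
    ((∀ x ∈ EI α β, DifferentiableAt ℝ φ x) ∧ deriv φ ∈ CNE α β φ n) ↔
      ∀ k : ℕ, (k : ℕ∞) ≤ n →
        (∀ i < k + 1, ∀ x ∈ EI α β, DifferentiableAt ℝ (iteratedDeriv i φ) x) ∧
          ContExt α β (fun x => φ x ^ k * iteratedDeriv (k + 1) φ x) := by
  have hφ0 : ∀ x ∈ EI α β, φ x ≠ 0 := fun x hx => (hφpos x hx).ne'
  simp only [Nat.lt_add_one_iff, mem_CNE_iff]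
  constructor
  · rintro ⟨hφd, h⟩ k hk
    exact (deriv_mem_CN_iff_forall_le hφd hφ0 k).1 (h k hk) k le_rfl
  · intro h
    have hφd : ∀ x ∈ EI α β, DifferentiableAt ℝ φ x := by
      simpa using (h 0 (by simp)).1 0 le_rfl
    exact ⟨hφd, fun k hk => (deriv_mem_CN_iff_forall_le hφd hφ0 k).2 fun j hj =>
      h j ((Nat.cast_le.2 hj).trans hk)⟩

/-- for `n ∈ ℤ₊ ∪ {∞}`: `φ` is differentiable on `(α,β)` with `φ′` extending
to a function on `[α,β]` belonging to `C_φ^{(n)}` if and only if, for all `0 ≤ k ≤ n`, `φ`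
is `(k+1)`-times differentiable on `(α,β)` and `φ^k ∂_t^{k+1} φ` extends to a continuous
function on `[α,β]`. -/
theorem deriv_mem_CN_iff (α β : EReal) (hαβ : α < β) (φ : ℝ → ℝ)
    (hφc : ContinuousOn φ (EI α β)) (hφpos : ∀ x ∈ EI α β, 0 < φ x)
    (n : ℕ∞) :
    ((∀ x ∈ EI α β, DifferentiableAt ℝ φ x) ∧ deriv φ ∈ CNE α β φ n) ↔
      ∀ k : ℕ, (k : ℕ∞) ≤ n →
        (∀ i < k + 1, ∀ x ∈ EI α β, DifferentiableAt ℝ (iteratedDeriv i φ) x) ∧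
          ContExt α β (fun x => φ x ^ k * iteratedDeriv (k + 1) φ x) :=
  deriv_mem_CN_iff_general α β φ hφpos n
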